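/- arXiv:1610.04807 — 7 statements merged into one kernel-verified Lean document; each statement's English description precedes it below -/
import Mathlib

section
/- Let α₁, ..., α_k be k linearly independent vectors in ℤ^E, and let X = (X_e)_{e∈E} be independent real random variables each with density bounded by φ. Then for any measurable sets J₁, ..., J_k ⊂ ℝ each of Lebesgue measure at most ε, the probability that ⟨α_i, X⟩ ∈ J_i for all i ≤ k is at most (φε)^k. -/
open MeasureTheory ProbabilityTheory
open scoped ENNReal Matrix

/-!
Since the `α i` are linearly independent, some `k` coordinates `f j` carry an invertible
integer minor `N`. The block `Y = (X (f j))_j` is independent of the remaining coordinates `Z`,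
so it suffices to bound, for each fixed value `z` of `Z`, the probability that `N Y + c z` lies
in the box `∏ J i`. The law of `Y` is at most `φ ^ k` times Lebesgue measure, and the preimage
of the shifted box under `N` has volume `ε ^ k / |det N| ≤ ε ^ k`, as `det N` is a nonzero
integer.
-/

theorem MeasureTheory.Measure.prod_le_smul_prod {α β : Type*} [MeasurableSpace α]
    [MeasurableSpace β] {μ₁ ν₁ : Measure α} {μ₂ ν₂ : Measure β} [SFinite ν₂] {c₁ c₂ : ℝ≥0∞}
    (h₁ : μ₁ ≤ c₁ • ν₁) (h₂ : μ₂ ≤ c₂ • ν₂) :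
    μ₁.prod μ₂ ≤ (c₁ * c₂) • ν₁.prod ν₂ :=
  calc μ₁.prod μ₂ ≤ (c₁ • ν₁).prod (c₂ • ν₂) := Measure.prod_mono h₁ h₂
    _ = (c₁ * c₂) • ν₁.prod ν₂ := by
      rw [Measure.prod_smul_left, Measure.prod_smul_right, smul_smul]

theorem MeasureTheory.Measure.pi_le_smul_pi {n : ℕ} {α : Fin n → Type*}
    [∀ i, MeasurableSpace (α i)] {μ ν : ∀ i, Measure (α i)} [∀ i, SigmaFinite (μ i)]
    [∀ i, SigmaFinite (ν i)] {c : Fin n → ℝ≥0∞} (h : ∀ i, μ i ≤ c i • ν i) :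
    Measure.pi μ ≤ (∏ i, c i) • Measure.pi ν := by
  induction n with
  | zero => simp [Measure.pi_of_empty μ, Measure.pi_of_empty ν]
  | succ n ih =>
    rw [← (measurePreserving_piFinSuccAbove μ 0).symm.map_eq,
      ← (measurePreserving_piFinSuccAbove ν 0).symm.map_eq, Fin.prod_univ_succAbove _ 0,
      ← Measure.map_smul]
    exact Measure.map_mono (Measure.prod_le_smul_prod (h 0) (ih fun j => h _))
      (MeasurableEquiv.measurable _)

theorem Matrix.exists_submatrix_det_ne_zero {K m n : Type*} [Field K] [Fintype m]
    [DecidableEq m] [Fintype n] {M : Matrix m n K} (hM : LinearIndependent K M.row) :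
    ∃ f : m → n, Function.Injective f ∧ (M.submatrix id f).det ≠ 0 := by
  have hspan : Submodule.span K (Set.range M.col) = ⊤ := by
    apply Submodule.eq_top_of_finrank_eq
    rw [← rank_eq_finrank_span_cols, hM.rank_matrix, Module.finrank_fintype_fun_eq_card]
  obtain ⟨κ, a, ha, haspan, hali⟩ := exists_linearIndependent' K M.col
  have : Fintype κ := Fintype.ofInjective a ha
  have hcard : Fintype.card m = Fintype.card κ := by
    rw [linearIndependent_iff_card_eq_finrank_span.mp hali, Set.finrank, haspan, hspan,
      finrank_top, Module.finrank_fintype_fun_eq_card]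
  let e := Fintype.equivOfCardEq hcard
  refine ⟨a ∘ e, ha.comp e.injective, ?_⟩
  exact ((Matrix.isUnit_iff_isUnit_det _).mp
    (Matrix.linearIndependent_cols_iff_isUnit.mp (hali.comp e e.injective))).ne_zero

theorem Matrix.volume_preimage_toLin'_map_intCast_le {ι : Type*} [Fintype ι] [DecidableEq ι]
    {N : Matrix ι ι ℤ} (hN : N.det ≠ 0) (s : Set (ι → ℝ)) :
    volume (Matrix.toLin' (N.map ((↑) : ℤ → ℝ)) ⁻¹' s) ≤ volume s := by
  have hdet : LinearMap.det (Matrix.toLin' (N.map ((↑) : ℤ → ℝ))) = N.det := by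
    rw [LinearMap.det_toLin', Int.cast_det]
  rw [Measure.addHaar_preimage_linearMap _ (by rw [hdet]; exact_mod_cast hN), hdet]
  refine mul_le_of_le_one_left zero_le (ENNReal.ofReal_le_one.mpr ?_)
  rw [abs_inv]
  exact inv_le_one_of_one_le₀ (by exact_mod_cast Int.one_le_abs hN)

theorem Matrix.volume_setOf_mulVec_add_mem_le {ι : Type*} [Fintype ι] [DecidableEq ι]
    {N : Matrix ι ι ℤ} (hN : N.det ≠ 0) (c : ι → ℝ) {J : ι → Set ℝ} {ε : ℝ≥0∞}
    (hJ : ∀ i, volume (J i) ≤ ε) :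
    volume {x | ∀ i, (N.map ((↑) : ℤ → ℝ) *ᵥ x) i + c i ∈ J i} ≤ ε ^ Fintype.card ι :=
  calc volume {x | ∀ i, (N.map ((↑) : ℤ → ℝ) *ᵥ x) i + c i ∈ J i}
      = volume (Matrix.toLin' (N.map ((↑) : ℤ → ℝ)) ⁻¹'
          Set.univ.pi fun i => (· + c i) ⁻¹' J i) := by
        apply congrArg; ext x; simp
    _ ≤ volume (Set.univ.pi fun i => (· + c i) ⁻¹' J i) :=
        Matrix.volume_preimage_toLin'_map_intCast_le hN _
    _ = ∏ i, volume (J i) := by simp only [volume_pi_pi, measure_preimage_add_right]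
    _ ≤ ε ^ Fintype.card ι := Finset.prod_le_pow_card _ _ _ fun i _ => hJ i

theorem Function.Injective.sum_comp_add_sum_compl_image {ι ι' M : Type*} [Fintype ι]
    [Fintype ι'] [DecidableEq ι] [AddCommMonoid M] {f : ι' → ι} (hf : f.Injective)
    (g : ι → M) :
    ∑ j, g (f j) + ∑ i : ↥(Finset.univ.image f)ᶜ, g i = ∑ i, g i := by
  rw [← Finset.sum_add_sum_compl (Finset.univ.image f) g, Finset.sum_image hf.injOn,
    Finset.sum_coe_sort]

theorem ProbabilityTheory.iIndepFun.indepFun_comp_compl_image {Ω ι ι' β : Type*}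
    [MeasurableSpace Ω] [MeasurableSpace β] {P : Measure Ω} [Fintype ι] [Fintype ι']
    [DecidableEq ι] {X : ι → Ω → β} (hX : iIndepFun X P) (hXm : ∀ i, Measurable (X i))
    (f : ι' → ι) :
    IndepFun (fun ω j => X (f j) ω) (fun ω (i : ↥(Finset.univ.image f)ᶜ) => X i ω) P :=
  (hX.indepFun_finset _ _ disjoint_compl_right hXm).comp
    (measurable_pi_lambda _ fun j => measurable_pi_apply
      ⟨f j, Finset.mem_image_of_mem f (Finset.mem_univ j)⟩) measurable_id

theorem ProbabilityTheory.IndepFun.measure_mem_le {Ω α β : Type*} [MeasurableSpace Ω]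
    [MeasurableSpace α] [MeasurableSpace β] {P : Measure Ω} [IsProbabilityMeasure P]
    {Y : Ω → α} {Z : Ω → β} (hYZ : IndepFun Y Z P) (hY : Measurable Y) (hZ : Measurable Z)
    {ρ : Measure α} [SFinite ρ] {C V : ℝ≥0∞} (hYρ : P.map Y ≤ C • ρ) {B : Set (α × β)}
    (hB : MeasurableSet B) (hslice : ∀ z, ρ {x | (x, z) ∈ B} ≤ V) :
    P {ω | (Y ω, Z ω) ∈ B} ≤ C * V :=
  have := Measure.isProbabilityMeasure_map (μ := P) hZ.aemeasurable
  calc P {ω | (Y ω, Z ω) ∈ B} = (P.map Y).prod (P.map Z) B := by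
        rw [← (indepFun_iff_map_prod_eq_prod_map_map hY.aemeasurable hZ.aemeasurable).mp hYZ,
          Measure.map_apply (hY.prodMk hZ) hB]
        rfl
    _ ≤ (C • ρ).prod (P.map Z) B := Measure.prod_mono hYρ le_rfl B
    _ = C * ∫⁻ z, ρ {x | (x, z) ∈ B} ∂(P.map Z) := by
        rw [Measure.prod_smul_left, Measure.smul_apply, smul_eq_mul, Measure.prod_apply_symm hB]
        rfl
    _ ≤ C * ∫⁻ _, V ∂(P.map Z) := by gcongr with z; exact hslice z
    _ = C * V := by rw [lintegral_const, measure_univ, mul_one]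

/-- Lemma A.1 of Etscheid–Röglin: if `α 1, …, α k` are linearly independent integer
vectors in `ℤ^E` and `X = (X e)` are independent real random variables, each with
density bounded by `φ`, then for measurable sets `J i` of Lebesgue measure at most `ε`,
the probability that `⟨α i, X⟩ ∈ J i` for all `i` is at most `(φ ε)^k`. -/
theorem stmt0 {Ω : Type*} [MeasureSpace Ω] [IsProbabilityMeasure (ℙ : Measure Ω)]
    {E : Type*} [Fintype E] {k : ℕ}
    (X : E → Ω → ℝ) (hXmeas : ∀ e, Measurable (X e))
    (hindep : iIndepFun X ℙ)
    (φ : ℝ≥0∞)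
    (hdens : ∀ e, Measure.map (X e) ℙ ≤ φ • (volume : Measure ℝ))
    (α : Fin k → E → ℤ)
    (hα : LinearIndependent ℝ (fun i => fun e => (α i e : ℝ)))
    (ε : ℝ≥0∞) (J : Fin k → Set ℝ)
    (hJm : ∀ i, MeasurableSet (J i)) (hJ : ∀ i, volume (J i) ≤ ε) :
    ℙ {ω | ∀ i, (∑ e, (α i e : ℝ) * X e ω) ∈ J i} ≤ (φ * ε) ^ k := by
  classical
  obtain ⟨f, hf, hdet⟩ :=
    Matrix.exists_submatrix_det_ne_zero (M := (Matrix.of α).map ((↑) : ℤ → ℝ)) hα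
  set N : Matrix (Fin k) (Fin k) ℤ := (Matrix.of α).submatrix id f
  have hN : N.det ≠ 0 := by
    rw [Matrix.submatrix_map, ← Int.cast_det] at hdet
    exact_mod_cast hdet
  let T := (Finset.univ.image f)ᶜ
  let B : Set ((Fin k → ℝ) × (T → ℝ)) :=
    {p | ∀ i, (N.map ((↑) : ℤ → ℝ) *ᵥ p.1) i + ∑ t : T, (α i t : ℝ) * p.2 t ∈ J i}
  have hB : MeasurableSet B := by
    simp only [B, Set.ofPred_forall]
    exact MeasurableSet.iInter fun i => (by fun_prop : Measurable _) (hJm i)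
  have hlaw : Measure.map (fun ω j => X (f j) ω) ℙ ≤ φ ^ k • volume := by
    rw [(hindep.precomp hf).map_fun_eq_pi_map fun j => (hXmeas _).aemeasurable]
    simpa [volume_pi] using Measure.pi_le_smul_pi fun j => hdens (f j)
  have hevent : {ω | ∀ i, ∑ e, (α i e : ℝ) * X e ω ∈ J i} =
      {ω | ((fun j => X (f j) ω), (fun t : T => X t ω)) ∈ B} := by
    ext ω
    simp [T, B, N, ← hf.sum_comp_add_sum_compl_image, Matrix.mulVec, dotProduct]
  rw [hevent, mul_pow]
  exact (hindep.indepFun_comp_compl_image hXmeas f).measure_mem_le (by fun_prop) (by fun_prop)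
    hlaw hB fun z => (Matrix.volume_setOf_mulVec_add_mem_le hN
      (fun i => ∑ t : T, (α i t : ℝ) * z t) hJ).trans_eq
      (by rw [Fintype.card_fin])
end

section
/- For a sequence of single-vertex flips L on the complete graph, the rank of the move matrix A_L (whose t-th column is the vector α_t ∈ {-1,0,1}^E of coefficients of the Hamiltonian change at step t) does not depend on the initial spin configuration σ₀. -/
open Matrix

/-- Flip the spin of vertex `v`. -/
def flipSpin {n : ℕ} (v : Fin n) (σ : Fin n → ℝ) : Fin n → ℝ :=
  fun u => if u = v then -σ u else σ u

/-- The spin configuration obtained from `σ₀` by flipping the vertices of `L` in order. -/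
def evolve {n : ℕ} (σ₀ : Fin n → ℝ) : List (Fin n) → (Fin n → ℝ)
  | [] => σ₀
  | v :: L => evolve (flipSpin v σ₀) L

/-- A spin configuration takes values in `{-1, 1}`. -/
def isSpin {n : ℕ} (σ : Fin n → ℝ) : Prop := ∀ v, σ v = 1 ∨ σ v = -1

/-- The move matrix of a flip sequence `L` from initial configuration `σ₀` on the complete
graph: the `t`-th column is the vector `α_t` of coefficients of the change of the
Hamiltonian at step `t`, i.e. `(α_t)_{u v_t} = σ_{t-1}(v_t) σ_{t-1}(u)` for `u ≠ v_t` and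
`(α_t)_e = 0` for edges `e` not incident to `v_t`.  (Rows are indexed by ordered pairs;
each edge appears as two equal rows, which does not affect the rank.) -/
def moveMatrix {n : ℕ} (σ₀ : Fin n → ℝ) (L : List (Fin n)) :
    Matrix (Fin n × Fin n) (Fin L.length) ℝ :=
  fun e t =>
    if e.1 = L.get t ∧ e.2 ≠ L.get t then
      evolve σ₀ (L.take t.1) (L.get t) * evolve σ₀ (L.take t.1) e.2
    else if e.2 = L.get t ∧ e.1 ≠ L.get t then
      evolve σ₀ (L.take t.1) (L.get t) * evolve σ₀ (L.take t.1) e.1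
    else 0

/-- `s(L)`: the number of distinct vertices appearing in `L`. -/
def sDist {n : ℕ} (L : List (Fin n)) : ℕ := L.toFinset.card

/-- `s₂(L)`: the number of repeated vertices (appearing at least twice) in `L`. -/
def sRep {n : ℕ} (L : List (Fin n)) : ℕ :=
  (L.toFinset.filter fun v => 2 ≤ L.count v).card

/-- `s₁(L)`: the number of singletons (vertices appearing exactly once) in `L`. -/
def sSing {n : ℕ} (L : List (Fin n)) : ℕ :=
  (L.toFinset.filter fun v => L.count v = 1).card

/-- The block `L[i+1, j]` (0-indexed: positions `i, …, j-1`). -/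
def seg {n : ℕ} (L : List (Fin n)) (i j : ℕ) : List (Fin n) := (L.take j).drop i

/-- `L` does not revisit any state: no (nonempty) contiguous block of `L` contains every
vertex an even number of times. -/
def noRevisit {n : ℕ} (L : List (Fin n)) : Prop :=
  ∀ i j : ℕ, i < j → j ≤ L.length → ∃ v, ¬ Even ((seg L i j).count v)


lemma evolve_mul {n : ℕ} (L : List (Fin n)) (σ₀ : Fin n → ℝ) (u : Fin n) :
    evolve σ₀ L u = σ₀ u * evolve (fun _ => 1) L u := by
  induction L generalizing σ₀ with
  | nil => simp [evolve]
  | cons v L ih =>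
    simp only [evolve]
    rw [ih, ih (flipSpin v fun _ => 1)]
    have : flipSpin v σ₀ u = σ₀ u * flipSpin v (fun _ => 1) u := by
      by_cases huv : u = v <;> simp [flipSpin, huv]
    rw [this, mul_assoc]

lemma moveMatrix_eq {n : ℕ} (σ₀ : Fin n → ℝ) (L : List (Fin n)) :
    moveMatrix σ₀ L =
      Matrix.diagonal (fun e : Fin n × Fin n => σ₀ e.1 * σ₀ e.2) *
        moveMatrix (fun _ => 1) L := by
  ext e t
  rw [Matrix.diagonal_mul]
  simp only [moveMatrix]
  split
  · next hc =>
    rw [evolve_mul, evolve_mul (L.take t.1) σ₀ e.2]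
    rw [← hc.1]; ring
  · split
    · next hc =>
      rw [evolve_mul, evolve_mul (L.take t.1) σ₀ e.1]
      rw [← hc.1]; ring
    · ring

lemma rank_moveMatrix {n : ℕ} (σ₀ : Fin n → ℝ) (L : List (Fin n)) (h : isSpin σ₀) :
    (moveMatrix σ₀ L).rank = (moveMatrix (fun _ => 1) L).rank := by
  rw [moveMatrix_eq]
  apply Matrix.rank_mul_eq_right_of_isUnit_det
  rw [Matrix.det_diagonal]
  rw [isUnit_iff_ne_zero]
  apply Finset.prod_ne_zero_iff.mpr
  intro e _
  rcases h e.1 with h1 | h1 <;> rcases h e.2 with h2 | h2 <;>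
    simp [h1, h2]

/-- The rank of the move matrix of a flip sequence does not depend on the initial spin
configuration. -/
theorem stmt2 (n : ℕ) (L : List (Fin n)) (σ₀ σ₀' : Fin n → ℝ)
    (h : isSpin σ₀) (h' : isSpin σ₀') :
    (moveMatrix σ₀ L).rank = (moveMatrix σ₀' L).rank := by
  rw [rank_moveMatrix σ₀ L h, rank_moveMatrix σ₀' L h']
end

section
/- Let L = (v₁,...,v_ℓ) be a sequence of vertex flips on the complete graph K_n using s(L) distinct vertices. Then the rank of the move matrix A_L is at least min(s(L), n-1). -/
open Matrix

lemma isSpin_evolve {n : ℕ} (L : List (Fin n)) : ∀ σ₀ : Fin n → ℝ, isSpin σ₀ →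
    isSpin (evolve σ₀ L) := by
  induction L with
  | nil => intro σ₀ h; exact h
  | cons v L ih =>
    intro σ₀ h
    refine ih _ ?_
    intro u
    unfold flipSpin
    by_cases hu : u = v
    · rw [if_pos hu]
      rcases h u with h' | h' <;> rw [h'] <;> norm_num
    · rw [if_neg hu]; exact h u

lemma rank_ge_of_delta {m p : Type*} [Fintype m] [Fintype p] [DecidableEq p]
    (M : Matrix m p ℝ) (k : ℕ) (r : Fin k → m) (c : Fin k → p) (d : Fin k → ℝ)
    (hd0 : ∀ i, d i ≠ 0)
    (hd : ∀ i j, M (r i) (c j) = if i = j then d i else 0) : k ≤ M.rank := by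
  classical
  set π : (m → ℝ) →ₗ[ℝ] (Fin k → ℝ) := LinearMap.funLeft ℝ ℝ r with hπ
  have hmap : Submodule.map π (LinearMap.range M.mulVecLin) = ⊤ := by
    rw [Submodule.eq_top_iff']
    intro x
    refine ⟨M.mulVec (∑ i, (x i / d i) • (Pi.single (c i) (1:ℝ) : p → ℝ)), ⟨_, rfl⟩, ?_⟩
    funext j
    simp only [hπ, LinearMap.funLeft_apply, mulVec, dotProduct]
    simp only [Finset.sum_apply, Pi.smul_apply, Pi.single_apply, smul_eq_mul,
      mul_ite, mul_one, mul_zero, Finset.mul_sum]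
    rw [Finset.sum_comm]
    have key : ∀ i : Fin k,
        (∑ v : p, if v = c i then M (r j) v * (x i / d i) else 0)
          = if i = j then x j else 0 := by
      intro i
      rw [Finset.sum_ite_eq' Finset.univ (c i) (fun v => M (r j) v * (x i / d i))]
      rw [if_pos (Finset.mem_univ _), hd j i]
      by_cases hij : i = j
      · subst hij
        rw [if_pos rfl, if_pos rfl]
        rw [mul_comm]; exact div_mul_cancel₀ _ (hd0 i)
      · rw [if_neg (fun hh => hij hh.symm), if_neg hij, zero_mul]
    simp only [key]
    rw [Finset.sum_ite_eq' Finset.univ j (fun _ => x j)]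
    simp
  have h1 : Module.finrank ℝ (Submodule.map π (LinearMap.range M.mulVecLin)) ≤ M.rank :=
    Submodule.finrank_map_le π _
  rw [hmap, finrank_top, Module.finrank_pi] at h1
  simpa using h1

/-- Lemma 3.1(i): for any flip sequence `L` on `K_n`,
`rank(A_L) ≥ min(s(L), n-1)`. -/
theorem stmt3 (n : ℕ) (L : List (Fin n)) (σ₀ : Fin n → ℝ) (h : isSpin σ₀) :
    min (sDist L) (n - 1) ≤ (moveMatrix σ₀ L).rank := by
  classical
  obtain rfl | hn := Nat.eq_zero_or_pos n
  · simpa using Nat.zero_le _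
  obtain ⟨u₀, S, hSL, hu₀, hcard⟩ :
      ∃ (u₀ : Fin n) (S : Finset (Fin n)), S ⊆ L.toFinset ∧ u₀ ∉ S ∧
        min (sDist L) (n - 1) ≤ S.card := by
    by_cases hU : L.toFinset = Finset.univ
    · refine ⟨⟨0, hn⟩, Finset.univ.erase ⟨0, hn⟩, hU ▸ Finset.erase_subset _ _,
        Finset.notMem_erase _ _, ?_⟩
      rw [Finset.card_erase_of_mem (Finset.mem_univ _), Finset.card_univ, Fintype.card_fin]
      exact min_le_right _ _
    · obtain ⟨u₀, hu₀⟩ : ∃ u₀, u₀ ∉ L.toFinset := by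
        by_contra hc
        push_neg at hc
        exact hU (Finset.eq_univ_iff_forall.mpr hc)
      exact ⟨u₀, L.toFinset, le_refl _, hu₀, min_le_left _ _⟩
  have hmemL : ∀ w ∈ S, w ∈ L := fun w hw => List.mem_toFinset.mp (hSL hw)
  have hgS : ∀ i : Fin S.card, ((S.equivFin.symm i : S) : Fin n) ∈ S :=
    fun i => (S.equivFin.symm i).2
  set g : Fin S.card → Fin n := fun i => ((S.equivFin.symm i : S) : Fin n) with hg
  have hginj : Function.Injective g := fun i j hij =>
    S.equivFin.symm.injective (Subtype.ext hij)
  have hidx : ∀ i, L.idxOf (g i) < L.length :=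
    fun i => List.idxOf_lt_length_iff.mpr (hmemL _ (hgS i))
  have hu₀g : ∀ i, u₀ ≠ g i := fun i hi => hu₀ (hi ▸ hgS i)
  have hget : ∀ i, L.get ⟨L.idxOf (g i), hidx i⟩ = g i := by
    intro i
    simp only [List.get_eq_getElem]
    exact List.getElem_idxOf (hidx i)
  refine le_trans hcard (rank_ge_of_delta _ S.card (fun i => (u₀, g i))
    (fun i => ⟨L.idxOf (g i), hidx i⟩)
    (fun i => evolve σ₀ (L.take (L.idxOf (g i))) (g i) *
      evolve σ₀ (L.take (L.idxOf (g i))) u₀)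
    (fun i => ?_) (fun i j => ?_))
  · have hspin := isSpin_evolve (L.take (L.idxOf (g i))) σ₀ h
    have A : evolve σ₀ (L.take (L.idxOf (g i))) (g i) ≠ 0 := by
      rcases hspin (g i) with h1 | h1 <;> rw [h1] <;> norm_num
    have B : evolve σ₀ (L.take (L.idxOf (g i))) u₀ ≠ 0 := by
      rcases hspin u₀ with h1 | h1 <;> rw [h1] <;> norm_num
    exact mul_ne_zero A B
  · simp only [moveMatrix, hget, Fin.val_mk]
    by_cases hij : i = j
    · subst hij
      rw [if_neg (fun hh => hu₀g i hh.1), if_pos ⟨rfl, hu₀g i⟩, if_pos rfl]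
    · rw [if_neg (fun hh => hu₀g j hh.1),
        if_neg (fun hh => hij (hginj hh.1)), if_neg hij]
end

section
/- Let L be a sequence of vertex flips on the complete graph K_n using s(L) < n distinct vertices, and suppose L does not revisit any spin configuration (i.e., no block of L contains every vertex an even number of times). Then rank(A_L) ≥ s(L) + s₂(L)/2, where s₂(L) is the number of vertices appearing at least twice in L. -/
open Matrix

/-!
Fix a vertex `w` that does not occur in `L`. Since `w` never flips, the row of the edge `vw`
says that the kernel coordinates at the occurrences of `v`, weighted by the current spin of `v`,
sum to zero; so a kernel vector supported on a single occurrence of `v` vanishes there. For a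
repeated vertex `v`, the block from its first through its second occurrence contains `v` twice,
so by the no-revisit hypothesis some `u = f v ≠ v` occurs in it an odd number of times and has
opposite spins at these two occurrences; once the coordinates at the occurrences of `u` vanish,
the rows `vw` and `vu` kill the coordinates at the first two occurrences of `v`. Greedily
choosing at least `s₂(L)/2` repeated vertices `v₁, v₂, …` with `f vᵢ ∉ {vᵢ, vᵢ₊₁, …}` and
treating them in this order, the columns at the first occurrence of every vertex and the
second occurrence of every `vᵢ` are linearly independent.
-/

open Finset

section Occurrences

variable {α : Type*} [DecidableEq α] {L : List α} {v : α}

lemma count_take_succ (L : List α) (t : Fin L.length) (v : α) :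
    (L.take (t + 1)).count v = (L.take t).count v + if L.get t = v then 1 else 0 := by
  rw [List.take_add_one, List.getElem?_eq_getElem t.isLt, Option.toList_some, List.count_append,
    List.count_singleton]
  simp

lemma count_take_lt_count_take {t t' : Fin L.length} (ht : L.get t = v) (htt' : t < t') :
    (L.take t).count v < (L.take t').count v := by
  have := (List.take_prefix_take_left (l := L) (Nat.succ_le_of_lt htt')).count_le v
  rw [count_take_succ, if_pos ht] at this
  omega

lemma lt_of_count_take_lt {i j : ℕ} (h : (L.take i).count v < (L.take j).count v) : i < j :=
  lt_of_not_ge fun hji => h.not_ge ((List.take_prefix_take_left hji).count_le v)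

lemma eq_of_count_take_eq {t t' : Fin L.length} (ht : L.get t = v) (ht' : L.get t' = v)
    (h : (L.take t).count v = (L.take t').count v) : t = t' := by
  rcases lt_trichotomy t t' with hlt | heq | hgt
  · exact absurd h (count_take_lt_count_take ht hlt).ne
  · exact heq
  · exact absurd h (count_take_lt_count_take ht' hgt).ne'

lemma exists_get_eq_count_take_eq (L : List α) (v : α) {k : ℕ} (hk : k < L.count v) :
    ∃ t : Fin L.length, L.get t = v ∧ (L.take t).count v = k := by
  induction L generalizing k with
  | nil => simp at hk
  | cons a L ih =>
    by_cases hav : a = v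
    · subst hav
      cases k with
      | zero => exact ⟨⟨0, by simp⟩, rfl, by simp⟩
      | succ k =>
        obtain ⟨t, ht, htk⟩ := ih (k := k) (by simpa using hk)
        exact ⟨t.succ, by simpa using ht, by simpa using htk⟩
    · obtain ⟨t, ht, htk⟩ := ih (k := k) (by simpa [List.count_cons, hav] using hk)
      exact ⟨t.succ, by simpa using ht, by simpa [List.count_cons, hav] using htk⟩

def kthOccurrences (L : List α) (s : Finset α) (k : ℕ) : Finset (Fin L.length) :=
  {t | L.get t ∈ s ∧ (L.take t).count (L.get t) = k}

lemma mem_kthOccurrences {s : Finset α} {k : ℕ} {t : Fin L.length} :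
    t ∈ kthOccurrences L s k ↔ L.get t ∈ s ∧ (L.take t).count (L.get t) = k := by
  simp [kthOccurrences]

lemma card_kthOccurrences {s : Finset α} {k : ℕ} (hs : ∀ v ∈ s, k < L.count v) :
    #(kthOccurrences L s k) = #s := by
  refine card_nbij L.get (fun t ht => (mem_kthOccurrences.mp ht).1) ?_ ?_
  · intro t ht t' ht' h
    rw [mem_coe, mem_kthOccurrences] at ht ht'
    exact eq_of_count_take_eq rfl h.symm (by rw [ht.2, h, ht'.2])
  · intro v hv
    obtain ⟨t, ht, htk⟩ := exists_get_eq_count_take_eq L v (hs v hv)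
    exact ⟨t, mem_kthOccurrences.mpr ⟨ht ▸ hv, ht ▸ htk⟩, ht⟩

lemma disjoint_kthOccurrences {s s' : Finset α} {k k' : ℕ} (hk : k ≠ k') :
    Disjoint (kthOccurrences L s k) (kthOccurrences L s' k') :=
  disjoint_left.mpr fun _ ht ht' =>
    hk ((mem_kthOccurrences.mp ht).2.symm.trans (mem_kthOccurrences.mp ht').2)

end Occurrences

lemma Finset.exists_list_pairwise_card_le {α : Type*} [DecidableEq α] (f : α → α)
    (R : Finset α) :
    ∃ l : List α, (∀ v ∈ l, v ∈ R) ∧ l.Pairwise (fun a b => a ≠ b ∧ f a ≠ b) ∧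
      #R ≤ 2 * l.length := by
  induction R using Finset.strongInduction with
  | H R ih =>
    rcases R.eq_empty_or_nonempty with rfl | ⟨v, hv⟩
    · exact ⟨[], by simp⟩
    have hsub : (R.erase v).erase (f v) ⊂ R :=
      (erase_subset _ _).trans_ssubset (erase_ssubset hv)
    obtain ⟨l, hlR, hl, hcard⟩ := ih _ hsub
    refine ⟨v :: l, ?_, List.pairwise_cons.mpr ⟨fun b hb => ?_, hl⟩, ?_⟩
    · intro u hu
      rcases List.mem_cons.mp hu with rfl | hu
      · exact hv
      · exact hsub.subset (hlR u hu)
    · have := hlR b hb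
      simp only [mem_erase] at this
      exact ⟨this.2.1.symm, this.1.symm⟩
    · have h1 := pred_card_le_card_erase (s := R) (a := v)
      have h2 := pred_card_le_card_erase (s := R.erase v) (a := f v)
      simp only [List.length_cons]
      omega

lemma forall_of_pairwise_apply_ne {α : Type*} {P : α → Prop} {f : α → α} {l : List α}
    (hl : l.Pairwise fun a b => f a ≠ b) (hfl : ∀ v ∈ l, f v ≠ v) (hout : ∀ v ∉ l, P v)
    (hstep : ∀ v ∈ l, P (f v) → P v) : ∀ v, P v := by
  induction l with
  | nil => exact fun v => hout v List.not_mem_nil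
  | cons a l ih =>
    obtain ⟨hal, hl⟩ := List.pairwise_cons.mp hl
    refine ih hl (fun v hv => hfl v (List.mem_cons_of_mem a hv)) (fun v hv => ?_)
      (fun v hv => hstep v (List.mem_cons_of_mem a hv))
    by_cases hva : v = a
    · subst hva
      refine hstep v List.mem_cons_self (hout _ ?_)
      intro h
      rcases List.mem_cons.mp h with h | h
      · exact hfl v List.mem_cons_self h
      · exact hal _ h rfl
    · exact hout v (by simp [hva, hv])

theorem Matrix.card_le_rank_of_mulVec_eq_zero {m n K : Type*} [Fintype m] [Fintype n]
    [DecidableEq n] [Field K] (A : Matrix m n K) (s : Finset n)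
    (h : ∀ x, A *ᵥ x = 0 → (∀ j ∉ s, x j = 0) → x = 0) : #s ≤ A.rank := by
  have hinj : Function.Injective (A.submatrix id ((↑) : s → n)).mulVecLin := by
    rw [← LinearMap.ker_eq_bot, Matrix.ker_mulVecLin_eq_bot_iff]
    intro y hy
    have hext := h (fun j => if hj : j ∈ s then y ⟨j, hj⟩ else 0) ?_ (fun j hj => dif_neg hj)
    · funext j
      simpa using congrFun hext j
    · rw [← hy]
      funext i
      simp only [mulVec, dotProduct, submatrix_apply, id]
      rw [← Finset.sum_subset (subset_univ s) (fun j _ hj => by simp [hj]),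
        ← Finset.sum_coe_sort]
      simp
  calc #s = (A.submatrix id ((↑) : s → n)).rank := by
        rw [rank, LinearMap.finrank_range_of_inj hinj]; simp
    _ ≤ A.rank := rank_submatrix_le _ _ _

section Spins

variable {n : ℕ} {L : List (Fin n)} {σ₀ : Fin n → ℝ}

lemma evolve_apply (σ₀ : Fin n → ℝ) (l : List (Fin n)) (u : Fin n) :
    evolve σ₀ l u = (-1) ^ l.count u * σ₀ u := by
  induction l generalizing σ₀ with
  | nil => simp [evolve]
  | cons v l ih =>
    rw [evolve, ih, flipSpin, List.count_cons]
    by_cases huv : u = v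
    · subst huv; simp [pow_succ]
    · simp [huv, Ne.symm huv]

lemma evolve_ne_zero (hσ : ∀ u, σ₀ u ≠ 0) (l : List (Fin n)) (u : Fin n) :
    evolve σ₀ l u ≠ 0 := by
  rw [evolve_apply]
  exact mul_ne_zero (pow_ne_zero _ (by norm_num)) (hσ u)

lemma evolve_eq_of_not_mem {w : Fin n} (hw : w ∉ L) (i : ℕ) :
    evolve σ₀ (L.take i) w = σ₀ w := by
  rw [evolve_apply, List.count_eq_zero_of_not_mem fun h => hw (List.mem_of_mem_take h)]
  simp

lemma take_append_seg (L : List (Fin n)) {i j : ℕ} (hij : i ≤ j) :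
    L.take i ++ seg L i j = L.take j := by
  simpa [seg, List.take_take, min_eq_left hij] using List.take_append_drop i (L.take j)

lemma seg_succ (L : List (Fin n)) {i : ℕ} {t : Fin L.length} (hit : i ≤ t) :
    seg L i (t + 1) = seg L i t ++ [L.get t] := by
  rw [seg, seg, List.take_add_one, List.getElem?_eq_getElem t.isLt, Option.toList_some,
    List.drop_append_of_le_length (by simpa using hit)]
  rfl

lemma evolve_take_eq_neg_of_odd (σ₀ : Fin n → ℝ) {i j : ℕ} (hij : i ≤ j) {u : Fin n}
    (hodd : Odd ((seg L i j).count u)) :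
    evolve σ₀ (L.take j) u = -evolve σ₀ (L.take i) u := by
  rw [← take_append_seg L hij, evolve_apply, evolve_apply, List.count_append, pow_add,
    hodd.neg_one_pow]
  ring

end Spins

section NoRevisit

variable {n : ℕ} {L : List (Fin n)}

def OddBetweenFirstTwo (L : List (Fin n)) (v u : Fin n) : Prop :=
  ∀ t₁ t₂ : Fin L.length, L.get t₁ = v → L.get t₂ = v → (L.take t₁).count v = 0 →
    (L.take t₂).count v = 1 → Odd ((seg L t₁ t₂).count u)

lemma exists_odd_count_seg (hnr : noRevisit L) {v : Fin n} {t₁ t₂ : Fin L.length}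
    (ht₂ : L.get t₂ = v) (h : (L.take t₂).count v = (L.take t₁).count v + 1) :
    ∃ u ≠ v, Odd ((seg L t₁ t₂).count u) := by
  have h12 : (t₁ : ℕ) < t₂ := lt_of_count_take_lt (L := L) (v := v) (by omega)
  have hseg : (seg L t₁ t₂).count v = 1 := by
    have := congrArg (List.count v) (take_append_seg L h12.le)
    rw [List.count_append] at this
    omega
  obtain ⟨u, hu⟩ := hnr t₁ (t₂ + 1) (by omega) t₂.isLt
  rw [seg_succ L h12.le, List.count_append, List.count_singleton, ht₂] at hu
  by_cases huv : u = v
  · subst huv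
    simp [hseg] at hu
  · refine ⟨u, huv, ?_⟩
    simpa [Ne.symm huv] using hu

lemma exists_oddBetweenFirstTwo (hnr : noRevisit L) {v : Fin n} (hv : 2 ≤ L.count v) :
    ∃ u, u ≠ v ∧ OddBetweenFirstTwo L v u := by
  obtain ⟨t₁, ht₁, hc₁⟩ := exists_get_eq_count_take_eq L v (k := 0) (by omega)
  obtain ⟨t₂, ht₂, hc₂⟩ := exists_get_eq_count_take_eq L v (k := 1) (by omega)
  obtain ⟨u, huv, hodd⟩ := exists_odd_count_seg hnr (t₁ := t₁) ht₂ (by omega)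
  refine ⟨u, huv, fun s₁ s₂ hs₁ hs₂ hd₁ hd₂ => ?_⟩
  rwa [eq_of_count_take_eq hs₁ ht₁ (hd₁.trans hc₁.symm),
    eq_of_count_take_eq hs₂ ht₂ (hd₂.trans hc₂.symm)]

end NoRevisit

section MoveMatrix

variable {n : ℕ} {L : List (Fin n)} {σ₀ : Fin n → ℝ} {x : Fin L.length → ℝ} {w : Fin n}

lemma moveMatrix_apply_of_ne {a b : Fin n} (hab : a ≠ b) (t : Fin L.length) :
    moveMatrix σ₀ L (a, b) t = if L.get t = a ∨ L.get t = b then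
      evolve σ₀ (L.take t) a * evolve σ₀ (L.take t) b else 0 := by
  unfold moveMatrix
  split_ifs <;> grind

lemma sum_moveMatrix_row_eq_zero (hx : moveMatrix σ₀ L *ᵥ x = 0) {a b : Fin n} (hab : a ≠ b) :
    ∑ t with L.get t = a ∨ L.get t = b,
      evolve σ₀ (L.take t) a * evolve σ₀ (L.take t) b * x t = 0 := by
  have := congrFun hx (a, b)
  simpa [mulVec, dotProduct, moveMatrix_apply_of_ne hab, ite_mul, sum_filter] using this

lemma sum_occurrences_eq_zero (hx : moveMatrix σ₀ L *ᵥ x = 0) (hw : w ∉ L) (hσw : σ₀ w ≠ 0)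
    {v : Fin n} (hv : v ∈ L) :
    ∑ t with L.get t = v, evolve σ₀ (L.take t) v * x t = 0 := by
  have hrow := sum_moveMatrix_row_eq_zero hx (a := v) (b := w) (by rintro rfl; exact hw hv)
  have hfilter : (univ.filter fun t => L.get t = v ∨ L.get t = w) = univ.filter (L.get · = v) :=
    filter_congr fun t _ => or_iff_left fun h : L.get t = w => hw (h ▸ List.get_mem L t)
  rw [hfilter] at hrow
  simp only [evolve_eq_of_not_mem hw, mul_right_comm _ (σ₀ w), ← sum_mul] at hrow
  exact (mul_eq_zero.mp hrow).resolve_right hσw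

end MoveMatrix

section Kernel

variable {n : ℕ} {L : List (Fin n)} {σ₀ : Fin n → ℝ} {x : Fin L.length → ℝ} {w : Fin n}

lemma occurrences_vanish_of_first (hσ : ∀ u, σ₀ u ≠ 0) (hw : w ∉ L)
    (hx : moveMatrix σ₀ L *ᵥ x = 0) {v : Fin n}
    (hsupp : ∀ t, L.get t = v → x t ≠ 0 → (L.take t).count v = 0) :
    ∀ t, L.get t = v → x t = 0 := by
  intro t ht
  have hvL : v ∈ L := ht ▸ List.get_mem L t
  obtain ⟨t₀, ht₀, hc₀⟩ := exists_get_eq_count_take_eq L v (k := 0) (List.count_pos_iff.mpr hvL)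
  have hoff : ∀ t', L.get t' = v → t' ≠ t₀ → x t' = 0 := fun t' ht' hne => by
    by_contra hxt'
    exact hne (eq_of_count_take_eq ht' ht₀ ((hsupp t' ht' hxt').trans hc₀.symm))
  have hsum := sum_occurrences_eq_zero hx hw (hσ w) hvL
  rw [sum_eq_single_of_mem t₀ (mem_filter.mpr ⟨mem_univ _, ht₀⟩) fun t' ht' hne => by
    rw [hoff t' (mem_filter.mp ht').2 hne, mul_zero]] at hsum
  by_cases htt : t = t₀
  · rw [htt]
    exact (mul_eq_zero.mp hsum).resolve_left (evolve_ne_zero hσ _ _)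
  · exact hoff t ht htt

lemma occurrences_vanish_of_first_two (hσ : ∀ u, σ₀ u ≠ 0) (hw : w ∉ L)
    (hx : moveMatrix σ₀ L *ᵥ x = 0) {u v : Fin n} (hv : 2 ≤ L.count v) (huv : u ≠ v)
    (hodd : OddBetweenFirstTwo L v u) (hu : ∀ t, L.get t = u → x t = 0)
    (hsupp : ∀ t, L.get t = v → x t ≠ 0 → (L.take t).count v < 2) :
    ∀ t, L.get t = v → x t = 0 := by
  obtain ⟨t₁, ht₁, hc₁⟩ := exists_get_eq_count_take_eq L v (k := 0) (by omega)
  obtain ⟨t₂, ht₂, hc₂⟩ := exists_get_eq_count_take_eq L v (k := 1) (by omega)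
  have h12 : (t₁ : ℕ) < t₂ := lt_of_count_take_lt (L := L) (v := v) (by omega)
  have hne : t₁ ≠ t₂ := Fin.ne_of_lt h12
  have hoff : ∀ t, L.get t = v → t ≠ t₁ → t ≠ t₂ → x t = 0 := fun t ht hne₁ hne₂ => by
    by_contra hxt
    rcases (by have := hsupp t ht hxt; omega : (L.take t).count v = 0 ∨ (L.take t).count v = 1)
      with h | h
    · exact hne₁ (eq_of_count_take_eq ht ht₁ (h.trans hc₁.symm))
    · exact hne₂ (eq_of_count_take_eq ht ht₂ (h.trans hc₂.symm))
  have hflip : evolve σ₀ (L.take t₂) u = -evolve σ₀ (L.take t₁) u :=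
    evolve_take_eq_neg_of_odd σ₀ h12.le (hodd t₁ t₂ ht₁ ht₂ hc₁ hc₂)
  have hrow₁ := sum_occurrences_eq_zero hx hw (hσ w) (ht₁ ▸ List.get_mem L t₁)
  rw [sum_eq_add_of_mem t₁ t₂ (mem_filter.mpr ⟨mem_univ _, ht₁⟩)
    (mem_filter.mpr ⟨mem_univ _, ht₂⟩) hne fun t ht hne => by
    rw [hoff t (mem_filter.mp ht).2 hne.1 hne.2, mul_zero]] at hrow₁
  have hrow₂ := sum_moveMatrix_row_eq_zero hx (Ne.symm huv)
  rw [sum_eq_add_of_mem t₁ t₂ (mem_filter.mpr ⟨mem_univ _, .inl ht₁⟩)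
    (mem_filter.mpr ⟨mem_univ _, .inl ht₂⟩) hne fun t ht hne => by
    rcases (mem_filter.mp ht).2 with htv | htu
    · rw [hoff t htv hne.1 hne.2, mul_zero]
    · rw [hu t htu, mul_zero], hflip] at hrow₂
  have hc : evolve σ₀ (L.take t₁) u ≠ 0 := evolve_ne_zero hσ _ _
  have hx₁ : evolve σ₀ (L.take t₁) v * x t₁ = 0 := by
    have : evolve σ₀ (L.take t₁) u * (2 * (evolve σ₀ (L.take t₁) v * x t₁)) = 0 := by
      linear_combination hrow₂ + evolve σ₀ (L.take t₁) u * hrow₁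
    simpa [hc] using this
  have hx₂ : evolve σ₀ (L.take t₂) v * x t₂ = 0 := by linear_combination hrow₁ - hx₁
  intro t ht
  by_cases h₁ : t = t₁
  · exact h₁ ▸ (mul_eq_zero.mp hx₁).resolve_left (evolve_ne_zero hσ _ _)
  by_cases h₂ : t = t₂
  · exact h₂ ▸ (mul_eq_zero.mp hx₂).resolve_left (evolve_ne_zero hσ _ _)
  exact hoff t ht h₁ h₂

theorem eq_zero_of_mulVec_moveMatrix_eq_zero (hσ : ∀ u, σ₀ u ≠ 0) (hw : w ∉ L)
    {f : Fin n → Fin n} {l : List (Fin n)} (hl : l.Pairwise fun a b => f a ≠ b)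
    (hf : ∀ v ∈ l, 2 ≤ L.count v ∧ f v ≠ v ∧ OddBetweenFirstTwo L v (f v))
    (hx : moveMatrix σ₀ L *ᵥ x = 0)
    (hsupp : ∀ t ∉ kthOccurrences L L.toFinset 0 ∪ kthOccurrences L l.toFinset 1, x t = 0) :
    x = 0 := by
  have hsupp' : ∀ v t, L.get t = v → x t ≠ 0 →
      (L.take t).count v = 0 ∨ (v ∈ l ∧ (L.take t).count v = 1) := by
    rintro v t rfl hxt
    simpa [mem_kthOccurrences] using not_imp_comm.mp (hsupp t) hxt
  suffices ∀ v t, L.get t = v → x t = 0 from funext fun t => this _ t rfl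
  refine forall_of_pairwise_apply_ne hl (fun v hv => (hf v hv).2.1) (fun v hvl => ?_)
    (fun v hvl hfv => ?_)
  · exact occurrences_vanish_of_first hσ hw hx fun t ht hxt =>
      (hsupp' v t ht hxt).resolve_right fun h => hvl h.1
  · obtain ⟨hv, hfv_ne, hodd⟩ := hf v hvl
    exact occurrences_vanish_of_first_two hσ hw hx hv hfv_ne hodd hfv fun t ht hxt => by
      rcases hsupp' v t ht hxt with h | h <;> omega

end Kernel

/-- Lemma 3.1(ii): if `s(L) < n` and `L` does not revisit any state, then
`rank(A_L) ≥ s(L) + s₂(L)/2`. -/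
theorem stmt4 (n : ℕ) (L : List (Fin n)) (σ₀ : Fin n → ℝ) (h : isSpin σ₀)
    (hs : sDist L < n) (hnr : noRevisit L) :
    (sDist L : ℝ) + (sRep L : ℝ) / 2 ≤ ((moveMatrix σ₀ L).rank : ℝ) := by
  obtain ⟨w, hw⟩ : ∃ w, w ∉ L := by
    by_contra! hall
    have : L.toFinset = univ := eq_univ_of_forall fun v => List.mem_toFinset.mpr (hall v)
    simp [sDist, this] at hs
  have hσ : ∀ u, σ₀ u ≠ 0 := fun u => by rcases h u with hu | hu <;> simp [hu]
  have : Nonempty (Fin n) := ⟨w⟩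
  let R := L.toFinset.filter (2 ≤ L.count ·)
  choose! f hf using fun v (hv : v ∈ R) => exists_oddBetweenFirstTwo hnr (mem_filter.mp hv).2
  obtain ⟨l, hlR, hl, hcard⟩ := R.exists_list_pairwise_card_le f
  have hlcount : ∀ v ∈ l, 2 ≤ L.count v := fun v hv => (mem_filter.mp (hlR v hv)).2
  have hF : #(kthOccurrences L L.toFinset 0 ∪ kthOccurrences L l.toFinset 1) =
      sDist L + l.length := by
    rw [card_union_of_disjoint (disjoint_kthOccurrences zero_ne_one),
      card_kthOccurrences fun v hv => List.count_pos_iff.mpr (List.mem_toFinset.mp hv),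
      card_kthOccurrences fun v hv => hlcount v (List.mem_toFinset.mp hv),
      List.toFinset_card_of_nodup (hl.imp And.left), sDist]
  have hrank := (moveMatrix σ₀ L).card_le_rank_of_mulVec_eq_zero _ fun x hx hsupp =>
    eq_zero_of_mulVec_moveMatrix_eq_zero hσ hw (hl.imp And.right)
      (fun v hv => ⟨hlcount v hv, hf v (hlR v hv)⟩) hx hsupp
  rw [hF] at hrank
  have hrank' : (sDist L : ℝ) + l.length ≤ (moveMatrix σ₀ L).rank := by exact_mod_cast hrank
  have hcard' : (sRep L : ℝ) ≤ 2 * l.length := by exact_mod_cast hcard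
  linarith
end

section
/- For every a > 1 there exists C > 0 so that for every n there is a word L of length ⌊an⌋ over an alphabet of n letters such that every block B of L satisfies s₂(B)/s(B) ≤ C/log n. -/
/-!
With `A = ⌈a⌉` and `K = ⌊log₁₆ n⌋`, split the word into periods of length `u = (2A + 1) K`. Each
period starts with `K` letters used nowhere else; its remaining `2AK` positions are grouped into
`K` scales of `2A` positions, and a position of scale `j` carries a letter that recurs exactly
every `2^(j+1)` periods. A block meeting `T + 1` periods contains `K (T - 1)` fresh letters, while
a letter of scale `j` can repeat in it only if `2^(j+1) ≤ T`, and there are `2A · 2^(j+1)` such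
letters; summing the geometric series gives at most `4A (T - 1)` repeated letters, so
`s₂/s ≤ 4A/K`. The alphabet needed is about `n/2 + 2AK·2^K ≤ n`. When `K` is too small for
this, `log n` is bounded in terms of `A` and `s₂/s ≤ 1` suffices.
-/

open Finset

namespace SparseBlock

section Statistics

variable {α β ι : Type*} [DecidableEq α] [DecidableEq β]

def numDistinct (B : List α) : ℕ := #B.toFinset

def numRepeated (B : List α) : ℕ := #{v ∈ B.toFinset | 2 ≤ B.count v}

noncomputable def sparsity (B : List α) : ℝ := numRepeated B / numDistinct B

lemma sparsity_le_one (B : List α) : sparsity B ≤ 1 :=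
  div_le_one_of_le₀ (mod_cast card_filter_le _ _) (Nat.cast_nonneg _)

lemma sparsity_le_div {B : List α} {c K : ℕ} (hK : 0 < K)
    (h : numRepeated B * K ≤ c * numDistinct B) : sparsity B ≤ c / K := by
  rcases (numDistinct B).eq_zero_or_pos with h0 | hpos
  · simp only [sparsity, h0, Nat.cast_zero, div_zero]
    positivity
  · rw [sparsity, div_le_div_iff₀ (by exact_mod_cast hpos) (by exact_mod_cast hK)]
    exact_mod_cast h

lemma toFinset_map (B : List α) (g : α → β) : (B.map g).toFinset = B.toFinset.image g := by
  ext
  simp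

lemma count_map_of_injOn {B : List α} {g : α → β} (hg : Set.InjOn g B.toFinset) {v : α}
    (hv : v ∈ B) : (B.map g).count (g v) = B.count v := by
  rw [List.count_eq_countP, List.countP_map, List.count_eq_countP]
  refine List.countP_congr fun x hx => ?_
  simpa using hg.eq_iff (by simpa using hx) (by simpa using hv)

lemma numDistinct_map {B : List α} {g : α → β} (hg : Set.InjOn g B.toFinset) :
    numDistinct (B.map g) = numDistinct B := by
  rw [numDistinct, numDistinct, toFinset_map, card_image_of_injOn hg]

lemma numRepeated_map {B : List α} {g : α → β} (hg : Set.InjOn g B.toFinset) :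
    numRepeated (B.map g) = numRepeated B := by
  rw [numRepeated, numRepeated, toFinset_map, filter_image,
    card_image_of_injOn (hg.mono (coe_subset.mpr (filter_subset _ _)))]
  congr 1
  exact filter_congr fun v hv => by rw [count_map_of_injOn hg (List.mem_toFinset.mp hv)]

def repeatedLetters (f : ι → α) (I : Finset ι) : Finset α :=
  {v ∈ I.image f | 2 ≤ #{p ∈ I | f p = v}}

lemma exists_lt_of_mem_repeatedLetters [LinearOrder ι] {f : ι → α} {I : Finset ι} {v : α}
    (hv : v ∈ repeatedLetters f I) : ∃ p ∈ I, ∃ q ∈ I, p < q ∧ f p = v ∧ f q = v := by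
  obtain ⟨p, hp, q, hq, hpq⟩ := one_lt_card.mp (mem_filter.mp hv).2
  rw [mem_filter] at hp hq
  rcases hpq.lt_or_gt with h | h
  · exact ⟨p, hp.1, q, hq.1, h, hp.2, hq.2⟩
  · exact ⟨q, hq.1, p, hp.1, h, hq.2, hp.2⟩

lemma count_map_of_nodup [DecidableEq ι] {l : List ι} (hl : l.Nodup) (f : ι → α) (v : α) :
    (l.map f).count v = #{p ∈ l.toFinset | f p = v} := by
  rw [List.count_eq_countP, List.countP_map, List.countP_eq_length_filter,
    ← List.toFinset_card_of_nodup (hl.filter _), List.toFinset_filter]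
  simp

lemma numRepeated_map_of_nodup [DecidableEq ι] {l : List ι} (hl : l.Nodup) (f : ι → α) :
    numRepeated (l.map f) = #(repeatedLetters f l.toFinset) := by
  rw [numRepeated, repeatedLetters, toFinset_map]
  simp only [count_map_of_nodup hl]

lemma exists_injOn_fin (s : Finset α) {n : ℕ} (hs : #s ≤ n) (hn : 0 < n) :
    ∃ g : α → Fin n, Set.InjOn g s := by
  refine ⟨fun v => if hv : v ∈ s then Fin.castLE hs (s.equivFin ⟨v, hv⟩) else ⟨0, hn⟩,
    ?_⟩
  intro v hv w hw h
  simp only [mem_coe] at hv hw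
  simp only [dif_pos hv, dif_pos hw] at h
  simpa using s.equivFin.injective (Fin.castLE_injective hs h)

lemma exists_relabel_fin (W : List α) {n : ℕ} (hW : #W.toFinset ≤ n) (hn : 0 < n) :
    ∃ L : List (Fin n), L.length = W.length ∧ ∀ i j,
      numRepeated ((L.take j).drop i) = numRepeated ((W.take j).drop i) ∧
        numDistinct ((L.take j).drop i) = numDistinct ((W.take j).drop i) := by
  obtain ⟨g, hg⟩ := exists_injOn_fin _ hW hn
  refine ⟨W.map g, List.length_map _, fun i j => ?_⟩
  have hB : Set.InjOn g ((W.take j).drop i).toFinset := hg.mono fun v hv => by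
    simp only [mem_coe, List.mem_toFinset] at hv ⊢
    exact List.mem_of_mem_take (List.mem_of_mem_drop hv)
  rw [← List.map_take, ← List.map_drop]
  exact ⟨numRepeated_map hB, numDistinct_map hB⟩

end Statistics

section Blocks

lemma block_range_map {α : Type*} (f : ℕ → α) (N i j : ℕ) :
    (((List.range N).map f).take j).drop i = (List.range' i (min j N - i)).map f := by
  rw [← List.map_take, ← List.map_drop, List.take_range, List.range_eq_range',
    List.drop_range']
  simp

variable {α : Type*} [DecidableEq α]

lemma numRepeated_block_range_map (f : ℕ → α) (N i j : ℕ) :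
    numRepeated ((((List.range N).map f).take j).drop i) =
      #(repeatedLetters f (Ico i (i + (min j N - i)))) := by
  rw [block_range_map, numRepeated_map_of_nodup List.nodup_range', List.toFinset_range'_1]

lemma numDistinct_block_range_map (f : ℕ → α) (N i j : ℕ) :
    numDistinct ((((List.range N).map f).take j).drop i) =
      #((Ico i (i + (min j N - i))).image f) := by
  rw [block_range_map, numDistinct, toFinset_map, List.toFinset_range'_1]

end Blocks

section Construction

variable {K e u : ℕ}

/-- In each period of length `u`, the first `K` offsets carry fresh letters and offset `K + w`
carries a letter recurring every `2 ^ (w / e + 1)` periods. -/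
def sparseWord (K e u p : ℕ) : (ℕ × ℕ) ⊕ (ℕ × ℕ) :=
  if p % u < K then .inl (p / u, p % u)
  else .inr (p % u - K, p / u % 2 ^ ((p % u - K) / e + 1))

lemma exists_inr_of_sparseWord_eq {p q : ℕ} (hpq : p < q)
    (h : sparseWord K e u p = sparseWord K e u q) :
    ∃ w c, sparseWord K e u p = .inr (w, c) ∧ c < 2 ^ (w / e + 1) ∧
      p / u + 2 ^ (w / e + 1) ≤ q / u := by
  have hp := Nat.div_add_mod p u
  have hq := Nat.div_add_mod q u
  have hdiv : p / u ≤ q / u := Nat.div_le_div_right hpq.le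
  unfold sparseWord at h ⊢
  split_ifs at h ⊢ with hpK hqK
  · simp only [Sum.inl.injEq, Prod.mk.injEq] at h
    rw [h.1, h.2] at hp
    omega
  · simp only [Sum.inr.injEq, Prod.mk.injEq] at h
    obtain ⟨hw, hc⟩ := h
    have hr : p % u = q % u := by omega
    refine ⟨_, _, rfl, Nat.mod_lt _ (by positivity), ?_⟩
    have hlt : p / u < q / u := by
      refine hdiv.lt_of_ne fun heq => ?_
      rw [heq, hr] at hp
      omega
    rw [hr] at hc ⊢
    have := Nat.le_of_dvd (by omega) ((Nat.modEq_iff_dvd' hlt.le).mp hc)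
    omega

lemma mul_le_card_image_sparseWord (hK : K ≤ u) (x y : ℕ) :
    K * ((y - 1) / u - x / u - 1) ≤ #((Ico x y).image (sparseWord K e u)) := by
  calc K * ((y - 1) / u - x / u - 1)
      = #((Ioo (x / u) ((y - 1) / u) ×ˢ range K).image Sum.inl) := by
        rw [card_image_of_injective _ Sum.inl_injective, card_product, Nat.card_Ioo,
          card_range, mul_comm]
    _ ≤ _ := card_le_card ?_
  intro v hv
  simp only [mem_image, mem_product, mem_Ioo, mem_range] at hv
  obtain ⟨⟨t, r⟩, ⟨⟨htx, hty⟩, hr⟩, rfl⟩ := hv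
  have hu : 0 < u := by omega
  have hx : x < t * u := (Nat.div_lt_iff_lt_mul hu).mp htx
  have hy : (t + 1) * u ≤ y - 1 := (Nat.le_div_iff_mul_le hu).mp hty
  have hdiv : (u * t + r) / u = t := by
    rw [Nat.mul_add_div hu, Nat.div_eq_of_lt (by omega), add_zero]
  have hmod : (u * t + r) % u = r := by rw [Nat.mul_add_mod, Nat.mod_eq_of_lt (by omega)]
  refine mem_image.mpr
    ⟨u * t + r, mem_Ico.mpr ⟨?_, ?_⟩, by simp [sparseWord, hdiv, hmod, hr]⟩
  · rw [mul_comm]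
    omega
  · rw [add_mul, one_mul] at hy
    rw [mul_comm]
    omega

lemma card_repeatedLetters_sparseWord_le (he : 0 < e) (x y : ℕ) :
    #(repeatedLetters (sparseWord K e u) (Ico x y)) ≤ 2 * e * ((y - 1) / u - x / u - 1) := by
  set T := (y - 1) / u - x / u
  set J := Nat.log 2 T
  have hsub : repeatedLetters (sparseWord K e u) (Ico x y) ⊆ (range J).biUnion fun j =>
      (range e ×ˢ range (2 ^ (j + 1))).image fun sc => .inr (e * j + sc.1, sc.2) := by
    intro v hv
    obtain ⟨p, hp, q, hq, hpq, rfl, hqp⟩ := exists_lt_of_mem_repeatedLetters hv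
    obtain ⟨w, c, hpw, hc, hgap⟩ := exists_inr_of_sparseWord_eq hpq hqp.symm
    rw [mem_Ico] at hp hq
    have hx : x / u ≤ p / u := Nat.div_le_div_right hp.1
    have hy : q / u ≤ (y - 1) / u := Nat.div_le_div_right (by omega)
    have hj : w / e + 1 ≤ J := Nat.le_log_of_pow_le one_lt_two (by omega)
    rw [hpw, mem_biUnion]
    refine ⟨w / e, mem_range.mpr hj, mem_image.mpr ⟨(w % e, c), ?_, ?_⟩⟩
    · simpa using ⟨Nat.mod_lt w he, hc⟩
    · simp [Nat.div_add_mod]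
  have hgeom : ∑ j ∈ range J, 2 ^ j = 2 ^ J - 1 := by simpa using Nat.geomSum_eq le_rfl J
  have hJ : 2 ^ J - 1 ≤ T - 1 := by
    rcases T.eq_zero_or_pos with hT | hT
    · simp [J, hT]
    · have : 2 ^ J ≤ T := Nat.pow_log_le_self 2 hT.ne'
      omega
  calc _ ≤ _ := card_le_card hsub
    _ ≤ ∑ j ∈ range J, e * 2 ^ (j + 1) :=
        card_biUnion_le.trans (sum_le_sum fun j _ => card_image_le.trans (by simp))
    _ = 2 * e * ∑ j ∈ range J, 2 ^ j := by
        rw [mul_sum]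
        exact sum_congr rfl fun j _ => by ring
    _ ≤ 2 * e * (T - 1) := by rw [hgeom]; exact Nat.mul_le_mul_left _ hJ

lemma card_repeatedLetters_sparseWord_mul_le (hK : K ≤ u) (he : 0 < e) (x y : ℕ) :
    #(repeatedLetters (sparseWord K e u) (Ico x y)) * K ≤
      2 * e * #((Ico x y).image (sparseWord K e u)) :=
  calc _ ≤ 2 * e * ((y - 1) / u - x / u - 1) * K :=
        Nat.mul_le_mul_right _ (card_repeatedLetters_sparseWord_le he x y)
    _ = 2 * e * (K * ((y - 1) / u - x / u - 1)) := by ring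
    _ ≤ _ := Nat.mul_le_mul_left _ (mul_le_card_image_sparseWord hK x y)

lemma numRepeated_block_sparseWord_mul_le (hK : K ≤ u) (he : 0 < e) (N i j : ℕ) :
    numRepeated ((((List.range N).map (sparseWord K e u)).take j).drop i) * K ≤
      2 * e * numDistinct ((((List.range N).map (sparseWord K e u)).take j).drop i) := by
  rw [numRepeated_block_range_map, numDistinct_block_range_map]
  exact card_repeatedLetters_sparseWord_mul_le hK he _ _

lemma card_toFinset_sparseWord_le (hK : 0 < K) (he : 0 < e) (N : ℕ) :
    #((List.range N).map (sparseWord K e (K * (e + 1)))).toFinset ≤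
      (N / (K * (e + 1)) + 1) * K + K * e * 2 ^ K := by
  set u := K * (e + 1)
  calc _ ≤ #((range (N / u + 1) ×ˢ range K).image Sum.inl ∪
        (range (K * e) ×ˢ range (2 ^ K)).image Sum.inr) := card_le_card ?_
    _ ≤ _ := (card_union_le _ _).trans
        (add_le_add (card_image_le.trans (by simp)) (card_image_le.trans (by simp)))
  intro v hv
  simp only [List.mem_toFinset, List.mem_map, List.mem_range] at hv
  obtain ⟨p, hp, rfl⟩ := hv
  have hpu : p / u < N / u + 1 := Nat.lt_succ_of_le (Nat.div_le_div_right hp.le)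
  have hru : p % u < K * e + K := by
    have := Nat.mod_lt p (show 0 < u by positivity)
    simpa [u, mul_add] using this
  unfold sparseWord
  split_ifs with hr
  · exact mem_union_left _
      (mem_image_of_mem _ (mem_product.mpr ⟨mem_range.mpr hpu, mem_range.mpr hr⟩))
  · refine mem_union_right _
      (mem_image_of_mem _ (mem_product.mpr ⟨mem_range.mpr (by omega), ?_⟩))
    have hj : (p % u - K) / e < K := (Nat.div_lt_iff_lt_mul he).mpr (by omega)
    exact mem_range.mpr ((Nat.mod_lt _ (by positivity)).trans_le
      (Nat.pow_le_pow_right two_pos hj))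

end Construction

lemma alphabet_size_le {A K n N : ℕ} (hA : 0 < A) (hAK : A ≤ K) (hK : 3 ≤ K)
    (h16 : 16 ^ K ≤ n) (hN : N ≤ A * n) :
    (N / (K * (2 * A + 1)) + 1) * K + K * (2 * A) * 2 ^ K ≤ n := by
  set M := N / (K * (2 * A + 1))
  have hfresh : 2 * (M * K) ≤ n := by
    have hM : M * (K * (2 * A + 1)) ≤ A * n := (Nat.div_mul_le_self _ _).trans hN
    refine Nat.le_of_mul_le_mul_left ?_ hA
    nlinarith
  set X := 2 ^ K
  have hKX : K < X := Nat.lt_two_pow_self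
  have hAKX : A * K ≤ X * X := Nat.mul_le_mul (hAK.trans hKX.le) hKX.le
  have h8 : 8 ≤ X := Nat.pow_le_pow_right two_pos hK
  have hX4 : 16 ^ K = X * X * X * X := by
    rw [show (16 : ℕ) = 2 ^ 4 by norm_num, ← pow_mul, mul_comm, pow_mul]
    ring
  have hslot : 2 * (K + K * (2 * A) * X) ≤ n :=
    calc 2 * (K + K * (2 * A) * X) = 2 * K + 4 * (A * K) * X := by ring
      _ ≤ 2 * X + 4 * (X * X) * X := by gcongr
      _ ≤ X * X * X * X := by nlinarith [Nat.mul_le_mul_right (X * X * X) h8]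
      _ ≤ n := hX4 ▸ h16
  nlinarith

lemma log_le_three_mul_natLog_add_one (n : ℕ) : Real.log n ≤ 3 * (Nat.log 16 n + 1) := by
  rcases n.eq_zero_or_pos with rfl | hn
  · simp
  have hlt : (n : ℝ) < 16 ^ (Nat.log 16 n + 1) := by
    exact_mod_cast Nat.lt_pow_succ_log_self (by norm_num) n
  have h16 : Real.log 16 ≤ 3 := by
    rw [show (16 : ℝ) = 2 ^ 4 by norm_num, Real.log_pow]
    push_cast
    linarith [Real.log_two_lt_d9]
  calc Real.log n ≤ Real.log (16 ^ (Nat.log 16 n + 1)) :=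
        Real.log_le_log (by exact_mod_cast hn) hlt.le
    _ = (Nat.log 16 n + 1) * Real.log 16 := by rw [Real.log_pow]; push_cast; ring
    _ ≤ 3 * (Nat.log 16 n + 1) := by nlinarith

lemma exists_word_numRepeated_mul_le {A n N : ℕ} (hA : 0 < A) (hK : max A 3 ≤ Nat.log 16 n)
    (hN : N ≤ A * n) : ∃ L : List (Fin n), L.length = N ∧ ∀ i j,
      numRepeated ((L.take j).drop i) * Nat.log 16 n ≤
        4 * A * numDistinct ((L.take j).drop i) := by
  set K := Nat.log 16 n
  have hn : n ≠ 0 := by rintro rfl; simp [K] at hK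
  have hW := (card_toFinset_sparseWord_le (by omega) (by omega) N).trans <|
    alphabet_size_le hA (le_of_max_le_left hK) (le_of_max_le_right hK)
      (Nat.pow_log_le_self 16 hn) hN
  obtain ⟨L, hlen, hL⟩ := exists_relabel_fin _ hW (Nat.pos_of_ne_zero hn)
  refine ⟨L, by simpa using hlen, fun i j => ?_⟩
  rw [(hL i j).1, (hL i j).2, show 4 * A = 2 * (2 * A) by ring]
  exact numRepeated_block_sparseWord_mul_le (by nlinarith) (by omega) N i j

lemma exists_word_sparsity_le {A n N : ℕ} (hA : 0 < A) (hn : 2 ≤ n) (hN : N ≤ A * n) :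
    ∃ L : List (Fin n), L.length = N ∧ ∀ i j,
      sparsity ((L.take j).drop i) ≤ (16 * A + 9) / Real.log n := by
  have hlog : 0 < Real.log n := Real.log_pos (by exact_mod_cast hn)
  have hlogK := log_le_three_mul_natLog_add_one n
  by_cases hK : max A 3 ≤ Nat.log 16 n
  · obtain ⟨L, hlen, hL⟩ := exists_word_numRepeated_mul_le hA hK hN
    refine ⟨L, hlen, fun i j => (sparsity_le_div (by omega) (hL i j)).trans ?_⟩
    have hK3 : (3 : ℝ) ≤ Nat.log 16 n := by exact_mod_cast le_of_max_le_right hK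
    rw [div_le_div_iff₀ (by positivity) hlog]
    push_cast
    nlinarith
  · refine ⟨List.replicate N ⟨0, by omega⟩, List.length_replicate,
      fun i j => (sparsity_le_one _).trans ?_⟩
    have hKA : ((Nat.log 16 n : ℕ) : ℝ) + 1 ≤ A + 3 := by
      exact_mod_cast (show Nat.log 16 n + 1 ≤ A + 3 by omega)
    rw [one_le_div hlog]
    linarith

end SparseBlock

/-- For every `a > 1` there is a constant `C > 0` such that for every `n` (here `n ≥ 2`,
so that `log n > 0`) there is a word `L` of length `⌊a n⌋` over an alphabet of `n` letters
such that every contiguous block `B` of `L` satisfies `s₂(B)/s(B) ≤ C / log n`. -/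
theorem stmt15 (a : ℝ) (ha : 1 < a) :
    ∃ C : ℝ, 0 < C ∧ ∀ n : ℕ, 2 ≤ n →
      ∃ L : List (Fin n), (L.length : ℤ) = ⌊a * n⌋ ∧
        ∀ i j : ℕ,
          (((((L.take j).drop i).toFinset.filter
              fun v => 2 ≤ ((L.take j).drop i).count v).card : ℝ) /
            ((L.take j).drop i).toFinset.card) ≤ C / Real.log n := by
  have hA : 0 < ⌈a⌉₊ := Nat.ceil_pos.mpr (by linarith)
  refine ⟨16 * ⌈a⌉₊ + 9, by positivity, fun n hn => ?_⟩
  have hfloor : 0 ≤ ⌊a * n⌋ := Int.floor_nonneg.mpr (by positivity)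
  have hN : ⌊a * n⌋.toNat ≤ ⌈a⌉₊ * n := by
    have : a * n ≤ ((⌈a⌉₊ * n : ℕ) : ℝ) := by
      push_cast
      exact mul_le_mul_of_nonneg_right (Nat.le_ceil a) (Nat.cast_nonneg n)
    rw [Int.toNat_le]
    exact_mod_cast (Int.floor_le_floor this).trans (Int.floor_natCast _).le
  obtain ⟨L, hlen, hL⟩ := SparseBlock.exists_word_sparsity_le hA hn hN
  exact ⟨L, by rw [hlen, Int.toNat_of_nonneg hfloor], hL⟩
end

section
/- Let A₁,...,A_m be finite sets and independently pick a uniform element from each. For any element x, let U_x be the event that x is never picked. Then the events {U_x} are negatively correlated: for any finite set S of elements and t ∉ S, P(U_t | ⋂_{s∈S} U_s) ≤ P(U_t) and P(U_tᶜ | ⋂_{s∈S} U_sᶜ) ≤ P(U_tᶜ). -/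
open MeasureTheory ProbabilityTheory Finset
open scoped ENNReal

/-!
The events `⋂ s ∈ S, U s` and `U t` are boxes, so under the product measure the first inequality
reduces to one coordinate, where "avoid `S`" and "avoid `t`" have disjoint complements; any two
such events are negatively correlated.

For the second inequality it suffices that `U t` and `V = ⋂ s ∈ S, (U s)ᶜ` are positively
correlated, i.e. `#V * #∏ᵢ (Aᵢ \ {t}) ≤ #(V ∩ ∏ᵢ (Aᵢ \ {t})) * #∏ᵢ Aᵢ`. Given `f ∈ V` and
`g ∈ ∏ᵢ (Aᵢ \ {t})`, swap `f i` and `g i` at every coordinate where `f i = t`. This is injective,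
the new first tuple avoids `t`, and since `t ∉ S` it still hits every point of `S`.
-/

section Correlation

variable {Ω : Type*} [MeasurableSpace Ω] {μ : Measure Ω} {s t : Set Ω}

lemma measure_inter_le_mul_of_disjoint_compl [IsProbabilityMeasure μ] (ht : MeasurableSet t)
    (hst : Disjoint sᶜ tᶜ) : μ (s ∩ t) ≤ μ s * μ t := by
  have htc : s ∩ tᶜ = tᶜ :=
    Set.inter_eq_right.2 fun x hx => by_contra fun hs => hst.ne_of_mem hs hx rfl
  calc μ (s ∩ t) = μ s - μ tᶜ := by
        refine ENNReal.eq_sub_of_add_eq (measure_ne_top _ _) ?_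
        simpa [htc] using measure_sdiff_add_inter (μ := μ) s ht.compl
    _ ≤ μ s - μ s * μ tᶜ := by
        gcongr
        exact mul_le_of_le_one_left' prob_le_one
    _ = μ s * μ t := by
        conv_rhs => rw [← compl_compl t, prob_compl_eq_one_sub ht.compl]
        rw [ENNReal.mul_sub (fun _ _ => measure_ne_top μ s), mul_one]

lemma cond_apply_le_of_measure_inter_le_mul [IsFiniteMeasure μ] (hs : MeasurableSet s)
    (h : μ (s ∩ t) ≤ μ t * μ s) : μ[t | s] ≤ μ t := by
  rw [cond_apply hs]
  calc (μ s)⁻¹ * μ (s ∩ t) ≤ (μ s)⁻¹ * (μ t * μ s) := by gcongr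
    _ ≤ μ t := by
        rw [mul_comm, mul_assoc]
        exact mul_le_of_le_one_right' (ENNReal.mul_inv_le_one _)

lemma measure_inter_compl_le_mul_of_mul_le_measure_inter [IsProbabilityMeasure μ]
    (ht : MeasurableSet t) (h : μ t * μ s ≤ μ (s ∩ t)) : μ (s ∩ tᶜ) ≤ μ tᶜ * μ s := by
  calc μ (s ∩ tᶜ) = μ s - μ (s ∩ t) :=
        ENNReal.eq_sub_of_add_eq (measure_ne_top _ _) (measure_sdiff_add_inter s ht)
    _ ≤ μ s - μ t * μ s := by gcongr
    _ = μ tᶜ * μ s := by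
        rw [prob_compl_eq_one_sub ht, ENNReal.sub_mul (fun _ _ => measure_ne_top μ s), one_mul]

end Correlation

lemma MeasureTheory.Measure.pi_univ_pi_inter_le_mul {ι : Type*} [Fintype ι] {α : ι → Type*}
    [∀ i, MeasurableSpace (α i)] (ν : ∀ i, Measure (α i)) [∀ i, IsProbabilityMeasure (ν i)]
    {B C : ∀ i, Set (α i)} (hC : ∀ i, MeasurableSet (C i)) (hBC : ∀ i, Disjoint (B i)ᶜ (C i)ᶜ) :
    Measure.pi ν (Set.univ.pi B ∩ Set.univ.pi C)
      ≤ Measure.pi ν (Set.univ.pi B) * Measure.pi ν (Set.univ.pi C) := by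
  rw [← Set.pi_inter_distrib, Measure.pi_pi, Measure.pi_pi, Measure.pi_pi, ← prod_mul_distrib]
  exact prod_le_prod' fun i _ => measure_inter_le_mul_of_disjoint_compl (hC i) (hBC i)

lemma MeasureTheory.Measure.pi_toMeasure_uniformOfFinset {ι α : Type*} [Fintype ι] [DecidableEq ι]
    [MeasurableSpace α] (A : ι → Finset α) (hA : ∀ i, (A i).Nonempty) :
    Measure.pi (fun i => (PMF.uniformOfFinset (A i) (hA i)).toMeasure)
      = (PMF.uniformOfFinset (Fintype.piFinset A) (Fintype.piFinset_nonempty.2 hA)).toMeasure := by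
  classical
  refine (Measure.pi_eq (μ := fun i => (PMF.uniformOfFinset (A i) (hA i)).toMeasure)
    fun s hs => ?_)
  have hbox : {f ∈ Fintype.piFinset A | f ∈ Set.univ.pi s}
      = Fintype.piFinset fun i => {x ∈ A i | x ∈ s i} := by
    ext f
    simp [forall_and]
  simp_rw [PMF.toMeasure_uniformOfFinset_apply _ _ (hs _),
    PMF.toMeasure_uniformOfFinset_apply _ _ (MeasurableSet.univ_pi hs), hbox,
    Fintype.card_piFinset, Nat.cast_prod]
  exact (ENNReal.prod_div_distrib_of_ne_top fun i _ => ENNReal.natCast_ne_top _).symm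

namespace Fintype

variable {ι α : Type*} [Fintype ι] [DecidableEq ι] [DecidableEq α]
  (A : ι → Finset α) (t : α) (V : Set (ι → α)) [DecidablePred (· ∈ V)]

lemma card_filter_piFinset_mul_card_piFinset_erase_le
    (hV : ∀ f ∈ V, ∀ g : ι → α, (∀ i, f i ≠ t → g i = f i) → g ∈ V) :
    #{f ∈ piFinset A | f ∈ V} * #(piFinset fun i => (A i).erase t)
      ≤ #{f ∈ piFinset (fun i => (A i).erase t) | f ∈ V} * #(piFinset A) := by
  set swapAt : α × α → α × α := fun p => if p.1 = t then p.swap else p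
  have mem_swapAt {i} {p : α × α} (hp : p ∈ A i ×ˢ (A i).erase t) :
      swapAt p ∈ (A i).erase t ×ˢ A i := by
    obtain ⟨hx, hy⟩ := mem_product.1 hp
    by_cases h : p.1 = t
    · simp only [swapAt, if_pos h]
      exact mem_product.2 ⟨hy, hx⟩
    · simp only [swapAt, if_neg h]
      exact mem_product.2 ⟨mem_erase.2 ⟨h, hx⟩, mem_of_mem_erase hy⟩
  have swapAt_inj {p q : α × α} (hp : p.2 ≠ t) (hq : q.2 ≠ t) (h : swapAt p = swapAt q) :
      p = q := by
    simp only [swapAt] at h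
    split_ifs at h with h₁ h₂ h₂ <;> simp_all [Prod.ext_iff]
  rw [← card_product, ← card_product]
  refine card_le_card_of_injOn
    (fun fg => (fun i => (swapAt (fg.1 i, fg.2 i)).1, fun i => (swapAt (fg.1 i, fg.2 i)).2))
    ?_ ?_
  · rintro ⟨f, g⟩ hfg
    obtain ⟨hf, hg⟩ := mem_product.1 hfg
    obtain ⟨hfA, hfV⟩ := mem_filter.1 hf
    have hmem i := mem_swapAt (i := i) (p := (f i, g i))
      (mem_product.2 ⟨mem_piFinset.1 hfA i, mem_piFinset.1 hg i⟩)
    refine mem_product.2 ⟨mem_filter.2 ⟨mem_piFinset.2 fun i => (mem_product.1 (hmem i)).1,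
      hV f hfV _ fun i hi => by simp [swapAt, hi]⟩,
      mem_piFinset.2 fun i => (mem_product.1 (hmem i)).2⟩
  · rintro ⟨f, g⟩ hfg ⟨f', g'⟩ hfg' h
    have hg := mem_piFinset.1 (mem_product.1 hfg).2
    have hg' := mem_piFinset.1 (mem_product.1 hfg').2
    have hcoord i : f i = f' i ∧ g i = g' i :=
      Prod.mk_inj.1 <| swapAt_inj (ne_of_mem_erase (hg i)) (ne_of_mem_erase (hg' i))
        (Prod.ext (congrFun (congrArg Prod.fst h) i) (congrFun (congrArg Prod.snd h) i))
    exact Prod.ext (funext fun i => (hcoord i).1) (funext fun i => (hcoord i).2)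

lemma card_filter_piFinset_pi_compl_singleton_mul_le
    [DecidablePred (· ∈ Set.univ.pi fun _ : ι => ({t}ᶜ : Set α))]
    (hV : ∀ f ∈ V, ∀ g : ι → α, (∀ i, f i ≠ t → g i = f i) → g ∈ V) :
    #{f ∈ piFinset A | f ∈ Set.univ.pi fun _ => {t}ᶜ} * #{f ∈ piFinset A | f ∈ V}
      ≤ #{f ∈ piFinset A | f ∈ (Set.univ.pi fun _ => {t}ᶜ) ∩ V}
        * #(piFinset A) := by
  have hW : {f ∈ piFinset A | f ∈ Set.univ.pi fun _ => {t}ᶜ}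
      = piFinset fun i => (A i).erase t := by
    ext f
    simp [forall_and, and_comm]
  have hWV : {f ∈ piFinset A | f ∈ (Set.univ.pi fun _ => {t}ᶜ) ∩ V}
      = {f ∈ piFinset fun i => (A i).erase t | f ∈ V} := by
    ext f
    simp [forall_and, and_comm, and_assoc]
  rw [hW, hWV, mul_comm]
  exact card_filter_piFinset_mul_card_piFinset_erase_le A t V hV

end Fintype

lemma PMF.toMeasure_uniformOfFinset_mul_le_inter {β : Type*} [MeasurableSpace β] {B : Finset β}
    (hB : B.Nonempty) {X Y : Set β} (hX : MeasurableSet X) (hY : MeasurableSet Y)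
    [DecidablePred (· ∈ X)] [DecidablePred (· ∈ Y)]
    (h : #{x ∈ B | x ∈ X} * #{x ∈ B | x ∈ Y} ≤ #{x ∈ B | x ∈ X ∩ Y} * #B) :
    (PMF.uniformOfFinset B hB).toMeasure X * (PMF.uniformOfFinset B hB).toMeasure Y
      ≤ (PMF.uniformOfFinset B hB).toMeasure (X ∩ Y) := by
  have hν (Z : Set β) [DecidablePred (· ∈ Z)] (hZ : MeasurableSet Z) :
      (PMF.uniformOfFinset B hB).toMeasure Z = #{x ∈ B | x ∈ Z} / #B := by
    rw [PMF.toMeasure_uniformOfFinset_apply _ _ hZ]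
    congr -- the library lemma filters with classical decidability
  have hB₀ : (#B : ℝ≥0∞) ≠ 0 := by simpa using hB.ne_empty
  rw [hν X hX, hν Y hY, hν (X ∩ Y) (hX.inter hY)]
  calc (#{x ∈ B | x ∈ X} : ℝ≥0∞) / #B * (#{x ∈ B | x ∈ Y} / #B)
      = #{x ∈ B | x ∈ X} * #{x ∈ B | x ∈ Y} / #B / #B := by simp only [div_eq_mul_inv]; ring
    _ ≤ #{x ∈ B | x ∈ X ∩ Y} / #B := by
        refine ENNReal.div_le_div_right ?_ _
        rw [ENNReal.div_le_iff hB₀ (ENNReal.natCast_ne_top _)]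
        exact_mod_cast h

/-- Pick independently a uniform element from each finite set `A i`, and let `U x` be the
event that `x` is never picked.  The events `U x` are negatively correlated: conditioning
on any family of events `U s` can only decrease `P(U t)` (for `t` not in the family), and
likewise for complements. -/
theorem stmt16 {α : Type*} [DecidableEq α] [MeasurableSpace α] [MeasurableSingletonClass α]
    {m : ℕ} (A : Fin m → Finset α) (hA : ∀ i, (A i).Nonempty)
    (μ : Measure ((i : Fin m) → α))
    (hμ : μ = Measure.pi fun i => (PMF.uniformOfFinset (A i) (hA i)).toMeasure)
    (U : α → Set ((i : Fin m) → α)) (hU : ∀ x, U x = {f | ∀ i, f i ≠ x})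
    (S : Finset α) (t : α) (ht : t ∉ S) :
    (μ[|⋂ s ∈ S, U s]) (U t) ≤ μ (U t) ∧
    (μ[|⋂ s ∈ S, (U s)ᶜ]) (U t)ᶜ ≤ μ (U t)ᶜ := by
  classical
  subst hμ
  have hU_pi (x : α) : U x = Set.univ.pi fun _ => ({x}ᶜ : Set α) := by ext f; simp [hU]
  have hU_meas (x : α) : MeasurableSet (U x) :=
    hU_pi x ▸ .univ_pi fun _ => (measurableSet_singleton x).compl
  have hUS : ⋂ s ∈ S, U s = Set.univ.pi fun _ => ((S : Set α)ᶜ) := by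
    ext f
    simp only [Set.mem_iInter, hU, Set.mem_ofPred_eq, Set.mem_univ_pi, Set.mem_compl_iff, mem_coe]
    exact ⟨fun h i hi => h _ hi i rfl, fun h s hs i hi => h i (hi ▸ hs)⟩
  have hUS_meas : MeasurableSet (⋂ s ∈ S, U s) := .biInter S.countable_toSet fun s _ => hU_meas s
  have hV_meas : MeasurableSet (⋂ s ∈ S, (U s)ᶜ) :=
    .biInter S.countable_toSet fun s _ => (hU_meas s).compl
  constructor
  · refine cond_apply_le_of_measure_inter_le_mul hUS_meas ?_
    rw [mul_comm, hUS, hU_pi t]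
    exact Measure.pi_univ_pi_inter_le_mul _ (fun _ => (measurableSet_singleton t).compl)
      fun _ => by simpa using ht
  · refine cond_apply_le_of_measure_inter_le_mul hV_meas
      (measure_inter_compl_le_mul_of_mul_le_measure_inter (hU_meas t) ?_)
    rw [Set.inter_comm, Measure.pi_toMeasure_uniformOfFinset, hU_pi t]
    refine PMF.toMeasure_uniformOfFinset_mul_le_inter _ (hU_pi t ▸ hU_meas t) hV_meas ?_
    refine Fintype.card_filter_piFinset_pi_compl_singleton_mul_le A t _ fun f hf g hg => ?_
    simp only [Set.mem_iInter, Set.mem_compl_iff, hU, Set.mem_ofPred_eq, not_forall, not_not]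
      at hf ⊢
    intro s hs
    obtain ⟨i, hi⟩ := hf s hs
    exact ⟨i, (hg i (hi ▸ fun h => ht (h ▸ hs))).trans hi⟩
end

section
/- For integers 2 ≤ b₀ < b₁ and γ ≥ 1, the product d = ∏_{i=b₀}^{b₁-1} (1 - 1/(γi)) satisfies ((b₀-1)/(b₁-1))^{1/γ} ≤ d ≤ (b₀/b₁)^{1/γ}. -/
/-!
Each factor `f i = 1 - 1/(γ i)` satisfies `1 - 1/i ≤ (f i)^γ ≤ i/(i+1)`: the left inequality is
Bernoulli's, the right one is `(f i)^γ ≤ exp (-1/i) ≤ i/(i+1)`. The outer products telescope to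
`(b₀-1)/(b₁-1)` and `b₀/b₁`, so they bound `d^γ`, and taking `γ`-th roots gives the claim.
-/

open Finset Real

theorem Finset.prod_Ico_div_succ_of_ne_zero {K : Type*} [Field K] {f : ℕ → K} {m n : ℕ}
    (hmn : m ≤ n) (hf : ∀ i ∈ Icc m n, f i ≠ 0) :
    ∏ i ∈ Ico m n, f i / f (i + 1) = f m / f n := by
  induction n, hmn using Nat.le_induction with
  | base => simp [div_self (hf m (left_mem_Icc.2 le_rfl))]
  | succ n hmn ih =>
    rw [prod_Ico_succ_top hmn, ih fun i hi => hf i (Icc_subset_Icc_right n.le_succ hi),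
      div_mul_div_cancel₀ (hf n (mem_Icc.2 ⟨hmn, n.le_succ⟩))]

namespace Real

variable {n : ℕ} {x : ℝ}

lemma one_sub_one_div_nonneg (h : 1 ≤ x) : 0 ≤ 1 - 1 / x :=
  sub_nonneg.2 (div_le_one_of_le₀ h (by linarith))

lemma one_sub_one_div_le_pow_one_sub_one_div_mul (h : 1 ≤ n * x) :
    1 - 1 / x ≤ (1 - 1 / (n * x)) ^ n := by
  have hn : (n : ℝ) ≠ 0 := by rintro hn; simp [hn] at h; linarith
  have bernoulli := one_add_mul_le_pow (a := -(1 / (n * x)))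
    (by linarith [(div_le_one_of_le₀ h (by linarith)).trans one_le_two]) n
  rwa [← sub_eq_add_neg, mul_neg, mul_one_div, div_mul_cancel_left₀ hn, ← sub_eq_add_neg,
    ← one_div] at bernoulli

lemma pow_one_sub_one_div_mul_le_div_add_one (h : 1 ≤ n * x) :
    (1 - 1 / (n * x)) ^ n ≤ x / (x + 1) := by
  have hx : 0 < x := pos_of_mul_pos_right (by linarith) n.cast_nonneg
  calc (1 - 1 / (n * x)) ^ n = (1 - x⁻¹ / n) ^ n := by field_simp
    _ ≤ exp (-x⁻¹) := one_sub_div_pow_le_exp_neg ((inv_le_iff_one_le_mul₀ hx).2 h)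
    _ = (exp x⁻¹)⁻¹ := exp_neg _
    _ ≤ (x⁻¹ + 1)⁻¹ := inv_anti₀ (by positivity) (add_one_le_exp _)
    _ = x / (x + 1) := by field_simp; ring

end Real

section

variable {n m k : ℕ}

lemma prod_Ico_one_sub_one_div (hm : 2 ≤ m) (hmk : m ≤ k) :
    ∏ i ∈ Ico m k, (1 - 1 / (i : ℝ)) = ((m : ℝ) - 1) / (k - 1) := by
  have hf : ∀ i ∈ Icc m k, (i : ℝ) - 1 ≠ 0 := fun i hi => by
    have : (2 : ℝ) ≤ i := by exact_mod_cast hm.trans (mem_Icc.1 hi).1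
    linarith
  rw [← prod_Ico_div_succ_of_ne_zero (f := fun i : ℕ => (i : ℝ) - 1) hmk hf]
  refine prod_congr rfl fun i hi => ?_
  have : (i : ℝ) ≠ 0 := by have := hm.trans (mem_Ico.1 hi).1; positivity
  rw [Nat.cast_add_one, add_sub_cancel_right, one_sub_div this]

lemma prod_Ico_div_add_one (hm : 0 < m) (hmk : m ≤ k) :
    ∏ i ∈ Ico m k, ((i : ℝ) / (i + 1)) = (m : ℝ) / k := by
  have hf : ∀ i ∈ Icc m k, (i : ℝ) ≠ 0 := fun i hi => by
    have := hm.trans_le (mem_Icc.1 hi).1; positivity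
  rw [← prod_Ico_div_succ_of_ne_zero (f := fun i : ℕ => (i : ℝ)) hmk hf]
  push_cast
  rfl

lemma one_le_natCast_mul_of_mem_Ico {i : ℕ} (hn : 1 ≤ n) (hm : 1 ≤ m) (hi : i ∈ Ico m k) :
    (1 : ℝ) ≤ n * i := by
  exact_mod_cast one_le_mul_of_one_le_of_one_le hn (hm.trans (mem_Ico.1 hi).1)

lemma div_le_prod_Ico_one_sub_one_div_mul_pow (hn : 1 ≤ n) (hm : 2 ≤ m) (hmk : m ≤ k) :
    ((m : ℝ) - 1) / (k - 1) ≤ (∏ i ∈ Ico m k, (1 - 1 / ((n : ℝ) * i))) ^ n := by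
  have hi : ∀ i ∈ Ico m k, (1 : ℝ) ≤ i := fun i hi => by
    exact_mod_cast one_le_two.trans (hm.trans (mem_Ico.1 hi).1)
  rw [← prod_Ico_one_sub_one_div hm hmk, ← prod_pow]
  exact prod_le_prod (fun i hi' => one_sub_one_div_nonneg (hi i hi')) fun i hi' =>
    one_sub_one_div_le_pow_one_sub_one_div_mul
      (one_le_natCast_mul_of_mem_Ico hn (one_le_two.trans hm) hi')

lemma prod_Ico_one_sub_one_div_mul_pow_le_div (hn : 1 ≤ n) (hm : 0 < m) (hmk : m ≤ k) :
    (∏ i ∈ Ico m k, (1 - 1 / ((n : ℝ) * i))) ^ n ≤ (m : ℝ) / k := by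
  have hni : ∀ i ∈ Ico m k, (1 : ℝ) ≤ n * i := fun i => one_le_natCast_mul_of_mem_Ico hn hm
  rw [← prod_Ico_div_add_one hm hmk, ← prod_pow]
  exact prod_le_prod (fun i hi => pow_nonneg (one_sub_one_div_nonneg (hni i hi)) n) fun i hi =>
    pow_one_sub_one_div_mul_le_div_add_one (hni i hi)

end

/-- For integers `2 ≤ b₀ < b₁` and `γ ≥ 1`, the product `d = ∏_{i=b₀}^{b₁-1} (1 - 1/(γ i))`
satisfies `((b₀-1)/(b₁-1))^(1/γ) ≤ d ≤ (b₀/b₁)^(1/γ)`. -/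
theorem stmt17 (b₀ b₁ γ : ℕ) (hb₀ : 2 ≤ b₀) (hb : b₀ < b₁) (hγ : 1 ≤ γ) :
    ((b₀ - 1 : ℝ) / (b₁ - 1)) ^ ((γ : ℝ)⁻¹) ≤
        (∏ i ∈ Finset.Ico b₀ b₁, (1 - 1 / ((γ : ℝ) * i))) ∧
      (∏ i ∈ Finset.Ico b₀ b₁, (1 - 1 / ((γ : ℝ) * i))) ≤ ((b₀ : ℝ) / b₁) ^ ((γ : ℝ)⁻¹) := by
  set d := ∏ i ∈ Finset.Ico b₀ b₁, (1 - 1 / ((γ : ℝ) * i))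
  have hγ' : (0 : ℝ) < γ := by exact_mod_cast hγ
  have hd : 0 ≤ d := prod_nonneg fun i hi =>
    one_sub_one_div_nonneg (one_le_natCast_mul_of_mem_Ico hγ (by omega) hi)
  have hb₀' : (2 : ℝ) ≤ b₀ := by exact_mod_cast hb₀
  have hb₁' : (b₀ : ℝ) < b₁ := by exact_mod_cast hb
  constructor
  · rw [rpow_inv_le_iff_of_pos (div_nonneg (by linarith) (by linarith)) hd hγ', rpow_natCast]
    exact div_le_prod_Ico_one_sub_one_div_mul_pow hγ hb₀ hb.le
  · rw [le_rpow_inv_iff_of_pos hd (by positivity) hγ', rpow_natCast]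
    exact prod_Ico_one_sub_one_div_mul_pow_le_div hγ (by omega) hb.le
end
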